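/- arXiv:2109.00641 — 2 statements merged into one kernel-verified Lean document; each statement's English description precedes it below -/
import Mathlib

section
/- Let M be a smooth manifold and let G⁰ ⊆ G¹ ⊆ G² ⊆ ... be an increasing sequence of C^∞(M)-submodules of vector fields on M. Define S⁰ := G⁰ and Sᵏ := span_{C^∞(M)}( S^{k-1}, [S^{k-1}, S^{k-1}], Gᵏ ) for k ≥ 1, where [·,·] denotes the Lie bracket of vector fields. Then for all k ≥ 0, the involutive closure of Gᵏ equals the involutive closure of Sᵏ. -/
/-- The involutive closure of a submodule `D` with respect to a bracket
operation `br`: the smallest submodule containing `D` that is closed under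
the bracket. -/
def invClosure {R : Type*} {L : Type*} [CommRing R] [AddCommGroup L] [Module R L]
    (br : L → L → L) (D : Submodule R L) : Submodule R L :=
  sInf {E : Submodule R L | D ≤ E ∧ ∀ x ∈ E, ∀ y ∈ E, br x y ∈ E}

lemma le_invClosure {R L : Type*} [CommRing R] [AddCommGroup L] [Module R L]
    (br : L → L → L) (D : Submodule R L) : D ≤ invClosure br D :=
  le_sInf fun _ hE => hE.1

lemma invClosure_closed {R L : Type*} [CommRing R] [AddCommGroup L] [Module R L]
    (br : L → L → L) (D : Submodule R L) :
    ∀ x ∈ invClosure br D, ∀ y ∈ invClosure br D, br x y ∈ invClosure br D := by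
  intro x hx y hy
  refine Submodule.mem_sInf.2 fun E hE => ?_
  exact hE.2 x (Submodule.mem_sInf.1 hx E hE) y (Submodule.mem_sInf.1 hy E hE)

lemma invClosure_le {R L : Type*} [CommRing R] [AddCommGroup L] [Module R L]
    (br : L → L → L) {D E : Submodule R L} (h1 : D ≤ E)
    (h2 : ∀ x ∈ E, ∀ y ∈ E, br x y ∈ E) : invClosure br D ≤ E :=
  sInf_le ⟨h1, h2⟩

lemma invClosure_mono {R L : Type*} [CommRing R] [AddCommGroup L] [Module R L]
    (br : L → L → L) {D E : Submodule R L} (h : D ≤ E) :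
    invClosure br D ≤ invClosure br E :=
  invClosure_le br (h.trans (le_invClosure br E)) (invClosure_closed br E)

/-- Lemma (invG): given an increasing sequence `G⁰ ⊆ G¹ ⊆ ⋯` of submodules of
vector fields, and `S⁰ := G⁰`, `Sᵏ := span(S^{k-1} ∪ [S^{k-1},S^{k-1}] ∪ Gᵏ)`,
the involutive closures of `Gᵏ` and `Sᵏ` coincide for every `k ≥ 0`. -/
theorem invClosure_G_eq_invClosure_S
    {R : Type*} {L : Type*} [CommRing R] [AddCommGroup L] [Module R L]
    (br : L → L → L)
    (G S : ℕ → Submodule R L)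
    (hGmono : ∀ k, G k ≤ G (k + 1))
    (hS0 : S 0 = G 0)
    (hSsucc : ∀ k, S (k + 1) =
      S k ⊔ Submodule.span R {z : L | ∃ x ∈ S k, ∃ y ∈ S k, z = br x y} ⊔ G (k + 1)) :
    ∀ k, invClosure br (G k) = invClosure br (S k) := by
  intro k
  induction k with
  | zero => rw [hS0]
  | succ k ih =>
    apply le_antisymm
    · refine invClosure_mono br ?_
      rw [hSsucc k]
      exact le_sup_right
    · refine invClosure_le br ?_ (invClosure_closed br (G (k + 1)))
      rw [hSsucc k]
      have hSk : S k ≤ invClosure br (G (k + 1)) :=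
        le_trans (le_trans (le_invClosure br (S k)) (ih ▸ le_rfl))
          (invClosure_mono br (hGmono k))
      refine sup_le (sup_le hSk ?_) (le_invClosure br _)
      rw [Submodule.span_le]
      rintro z ⟨x, hx, y, hy, rfl⟩
      exact invClosure_closed br _ x (hSk hx) y (hSk hy)
end

section
/- Let M be a smooth manifold, f a smooth vector field, and h a smooth real-valued function on M. Suppose that for all 0 ≤ i ≤ r−1 and for a fixed smooth vector field g, the functions L_g L_f^i h vanish identically on M (where L denotes the Lie derivative). Then dh(ad_f^{r} g) = (−1)^{r} L_g L_f^{r} h, where ad_f g := [f, g] and ad_f^{r} g := [f, ad_f^{r−1} g]. -/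
/-- Lie bracket of vector fields on a normed space. -/
noncomputable def vbracket {E : Type*} [NormedAddCommGroup E] [NormedSpace ℝ E]
    (X Y : E → E) : E → E :=
  fun x => fderiv ℝ Y x (X x) - fderiv ℝ X x (Y x)

/-- Lie derivative of a function along a vector field: `L_X h = dh(X)`. -/
noncomputable def lieD {E : Type*} [NormedAddCommGroup E] [NormedSpace ℝ E]
    (X : E → E) (h : E → ℝ) : E → ℝ :=
  fun x => fderiv ℝ h x (X x)

/-- Iterated Lie derivative `L_f^k h`. -/
noncomputable def lieDpow {E : Type*} [NormedAddCommGroup E] [NormedSpace ℝ E]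
    (f : E → E) (h : E → ℝ) : ℕ → (E → ℝ)
  | 0 => h
  | k + 1 => lieD f (lieDpow f h k)

/-- Iterated adjoint `ad_f^k g`: `ad_f^0 g = g`, `ad_f^{k+1} g = [f, ad_f^k g]`. -/
noncomputable def adpow {E : Type*} [NormedAddCommGroup E] [NormedSpace ℝ E]
    (f g : E → E) : ℕ → (E → E)
  | 0 => g
  | k + 1 => vbracket f (adpow f g k)

section Aux

variable {E : Type*} [NormedAddCommGroup E] [NormedSpace ℝ E]

lemma contDiff_lieD {X : E → E} {h : E → ℝ} (hX : ContDiff ℝ (⊤ : ℕ∞) X)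
    (hh : ContDiff ℝ (⊤ : ℕ∞) h) : ContDiff ℝ (⊤ : ℕ∞) (lieD X h) :=
  (hh.fderiv_right (by simp)).clm_apply hX

lemma contDiff_vbracket {X Y : E → E} (hX : ContDiff ℝ (⊤ : ℕ∞) X)
    (hY : ContDiff ℝ (⊤ : ℕ∞) Y) : ContDiff ℝ (⊤ : ℕ∞) (vbracket X Y) :=
  ((hY.fderiv_right (by simp)).clm_apply hX).sub ((hX.fderiv_right (by simp)).clm_apply hY)

lemma contDiff_lieDpow {f : E → E} {h : E → ℝ} (hf : ContDiff ℝ (⊤ : ℕ∞) f)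
    (hh : ContDiff ℝ (⊤ : ℕ∞) h) : ∀ k, ContDiff ℝ (⊤ : ℕ∞) (lieDpow f h k)
  | 0 => hh
  | k + 1 => contDiff_lieD hf (contDiff_lieDpow hf hh k)

lemma contDiff_adpow {f g : E → E} (hf : ContDiff ℝ (⊤ : ℕ∞) f)
    (hg : ContDiff ℝ (⊤ : ℕ∞) g) : ∀ k, ContDiff ℝ (⊤ : ℕ∞) (adpow f g k)
  | 0 => hg
  | k + 1 => contDiff_vbracket hf (contDiff_adpow hf hg k)

/-- Derivative of `L_Y h` at `x` in direction `v`. -/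
lemma fderiv_lieD_apply {Y : E → E} {h : E → ℝ} (hY : ContDiff ℝ (⊤ : ℕ∞) Y)
    (hh : ContDiff ℝ (⊤ : ℕ∞) h) (x v : E) :
    fderiv ℝ (lieD Y h) x v
      = fderiv ℝ (fderiv ℝ h) x v (Y x) + fderiv ℝ h x (fderiv ℝ Y x v) := by
  have h1 : HasFDerivAt (fderiv ℝ h) (fderiv ℝ (fderiv ℝ h) x) x :=
    ((hh.fderiv_right (m := 1) (by exact WithTop.coe_le_coe.mpr le_top)).differentiable one_ne_zero x).hasFDerivAt
  have h2 : HasFDerivAt Y (fderiv ℝ Y x) x := ((hY.differentiable (by simp)) x).hasFDerivAt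
  have := (h1.clm_apply h2).fderiv
  have : fderiv ℝ (lieD Y h) x
      = (fderiv ℝ h x).comp (fderiv ℝ Y x)
        + (fderiv ℝ (fderiv ℝ h) x).flip (Y x) := by
    rw [← this]; rfl
  rw [this]
  simp [ContinuousLinearMap.add_apply, ContinuousLinearMap.comp_apply,
    ContinuousLinearMap.flip_apply]
  ring

/-- The key bracket identity: `dh([X,Y]) = L_X L_Y h - L_Y L_X h`. -/
lemma fderiv_vbracket_apply {X Y : E → E} {h : E → ℝ} (hX : ContDiff ℝ (⊤ : ℕ∞) X)
    (hY : ContDiff ℝ (⊤ : ℕ∞) Y) (hh : ContDiff ℝ (⊤ : ℕ∞) h) (x : E) :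
    fderiv ℝ h x (vbracket X Y x) = lieD X (lieD Y h) x - lieD Y (lieD X h) x := by
  have hsymm : fderiv ℝ (fderiv ℝ h) x (X x) (Y x)
      = fderiv ℝ (fderiv ℝ h) x (Y x) (X x) := by
    apply second_derivative_symmetric (f := h) (f' := fderiv ℝ h)
    · exact fun y => ((hh.differentiable (by simp)) y).hasFDerivAt
    · exact ((hh.fderiv_right (m := 1) (by exact WithTop.coe_le_coe.mpr le_top)).differentiable one_ne_zero x).hasFDerivAt
  have e1 : lieD X (lieD Y h) x
      = fderiv ℝ (fderiv ℝ h) x (X x) (Y x) + fderiv ℝ h x (fderiv ℝ Y x (X x)) :=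
    fderiv_lieD_apply hY hh x (X x)
  have e2 : lieD Y (lieD X h) x
      = fderiv ℝ (fderiv ℝ h) x (Y x) (X x) + fderiv ℝ h x (fderiv ℝ X x (Y x)) :=
    fderiv_lieD_apply hX hh x (Y x)
  rw [e1, e2, hsymm]
  simp only [vbracket, map_sub]
  ring

lemma key_lemma {f g : E → E} {h : E → ℝ}
    (hf : ContDiff ℝ (⊤ : ℕ∞) f) (hg : ContDiff ℝ (⊤ : ℕ∞) g) (hh : ContDiff ℝ (⊤ : ℕ∞) h) :
    ∀ k j, (∀ i < j + k, ∀ x, lieD g (lieDpow f h i) x = 0) →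
      ∀ x, fderiv ℝ (lieDpow f h j) x (adpow f g k x)
        = (-1 : ℝ) ^ k * lieD g (lieDpow f h (j + k)) x := by
  intro k
  induction k with
  | zero => intro j _ x; simp [adpow, lieD]
  | succ k ih =>
    intro j hv x
    have hA : ContDiff ℝ (⊤ : ℕ∞) (adpow f g k) := contDiff_adpow hf hg k
    have hφ : ContDiff ℝ (⊤ : ℕ∞) (lieDpow f h j) := contDiff_lieDpow hf hh j
    have hbr : fderiv ℝ (lieDpow f h j) x (adpow f g (k + 1) x)
        = lieD f (lieD (adpow f g k) (lieDpow f h j)) x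
          - lieD (adpow f g k) (lieD f (lieDpow f h j)) x := by
      show fderiv ℝ (lieDpow f h j) x (vbracket f (adpow f g k) x) = _
      exact fderiv_vbracket_apply hf hA hφ x
    -- first term vanishes
    have hzero : lieD (adpow f g k) (lieDpow f h j) = fun _ => (0 : ℝ) := by
      funext y
      have := ih j (fun i hi => hv i (by omega)) y
      rw [show lieD (adpow f g k) (lieDpow f h j) y
          = fderiv ℝ (lieDpow f h j) y (adpow f g k y) from rfl, this,
        hv (j + k) (by omega) y, mul_zero]
    have ht1 : lieD f (lieD (adpow f g k) (lieDpow f h j)) x = 0 := by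
      rw [hzero]; simp [lieD]
    -- second term via ih at j+1
    have ht2 : lieD (adpow f g k) (lieD f (lieDpow f h j)) x
        = (-1 : ℝ) ^ k * lieD g (lieDpow f h (j + 1 + k)) x := by
      have := ih (j + 1) (fun i hi => hv i (by omega)) x
      exact this
    rw [hbr, ht1, ht2]
    have : j + 1 + k = j + (k + 1) := by omega
    rw [this]
    ring

end Aux

/-- Special case of Isidori's Lemma 4.1.2: if `L_g L_f^i h ≡ 0` for
`0 ≤ i ≤ r-1`, then `dh(ad_f^r g) = (-1)^r L_g L_f^r h`. -/
theorem dh_adpow_eq_of_lieD_vanish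
    {E : Type*} [NormedAddCommGroup E] [NormedSpace ℝ E]
    (f g : E → E) (h : E → ℝ)
    (hf : ContDiff ℝ (⊤ : ℕ∞) f) (hg : ContDiff ℝ (⊤ : ℕ∞) g) (hh : ContDiff ℝ (⊤ : ℕ∞) h)
    (r : ℕ) (hvanish : ∀ i < r, ∀ x, lieD g (lieDpow f h i) x = 0) :
    ∀ x, fderiv ℝ h x (adpow f g r x) = (-1 : ℝ) ^ r * lieD g (lieDpow f h r) x := by
  intro x
  have := key_lemma hf hg hh r 0 (fun i hi => hvanish i (by omega)) x
  simpa [lieDpow] using this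
end
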